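/- arXiv:1604.04121 — 2 statements merged into one kernel-verified Lean document; each statement's English description precedes it below -/
import Mathlib

section
/- Let m ≥ 1 and let ζ ∈ ℂ be a primitive m-th root of unity. Let σ be the ℂ-algebra automorphism of the polynomial ring ℂ[x, y] determined by σ(x) = ζ·x and σ(y) = ζ⁻¹·y. Then the invariant subalgebra ℂ[x,y]^σ is generated as a ℂ-algebra by x^m, x·y and y^m; moreover, the ℂ-algebra homomorphism ℂ[X, Y, Z] → ℂ[x, y] sending X ↦ x^m, Y ↦ y^m, Z ↦ x·y has image equal to ℂ[x,y]^σ and kernel equal to the principal ideal generated by X·Y − Z^m. -/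
/-!
`σ` scales the monomial `x^a y^b` by `ζ^(a-b)`, so a polynomial is invariant exactly when all
its monomials have `a ≡ b [MOD m]`, and such a monomial is `(x^m)^k (xy)^b` or `(y^m)^k (xy)^a`.
This gives the generators, and hence the image of `ψ`. For the kernel, the relation `XY = Z^m`
rewrites every polynomial in `ℂ[X,Y,Z]` into a combination of monomials `X^a Z^c` and `Y^b Z^c`;
`ψ` sends these to pairwise distinct monomials, so a linear left inverse of `ψ` on their span
exists and the kernel is generated by `XY - Z^m`.
-/

open MvPolynomial

section DiagonalAction

variable {R ι : Type*} [CommSemiring R] {σ : MvPolynomial ι R →ₐ[R] MvPolynomial ι R}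
  {w : ι → R}

theorem map_monomial_of_map_X_eq_C_mul_X (hσ : ∀ i, σ (X i) = C (w i) * X i)
    (d : ι →₀ ℕ) (c : R) :
    σ (monomial d c) = monomial d ((d.prod fun i k => w i ^ k) * c) := by
  calc σ (monomial d c) = σ (C c) * d.prod fun i k => σ (X i) ^ k := by
        rw [monomial_eq, map_mul, map_finsuppProd]; simp only [map_pow]
    _ = C c * ((d.prod fun i k => C (w i) ^ k) * d.prod fun i k => X i ^ k) := by
        simp only [hσ, mul_pow, Finsupp.prod_mul, ← algebraMap_eq, AlgHom.commutes]
    _ = monomial d ((d.prod fun i k => w i ^ k) * c) := by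
        rw [monomial_eq, C_mul, map_finsuppProd]; simp only [C_pow]; ring

theorem coeff_map_of_map_X_eq_C_mul_X (hσ : ∀ i, σ (X i) = C (w i) * X i)
    (f : MvPolynomial ι R) (d : ι →₀ ℕ) :
    coeff d (σ f) = (d.prod fun i k => w i ^ k) * coeff d f := by
  classical
  induction f using MvPolynomial.induction_on' with
  | monomial e c =>
    rw [map_monomial_of_map_X_eq_C_mul_X hσ, coeff_monomial, coeff_monomial]
    split_ifs with h <;> simp [h]
  | add p q hp hq => rw [map_add, coeff_add, coeff_add, hp, hq, mul_add]

theorem map_eq_self_iff_of_map_X_eq_C_mul_X [IsDomain R] (hσ : ∀ i, σ (X i) = C (w i) * X i)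
    (f : MvPolynomial ι R) :
    σ f = f ↔ ∀ d ∈ f.support, (d.prod fun i k => w i ^ k) = 1 := by
  simp only [MvPolynomial.ext_iff, coeff_map_of_map_X_eq_C_mul_X hσ, mem_support_iff,
    mul_left_eq_self₀]
  exact forall_congr' fun d => or_iff_not_imp_right

end DiagonalAction

theorem IsPrimitiveRoot.pow_mul_inv_pow_eq_one_iff {K : Type*} [Field K] {ζ : K} {m : ℕ}
    (hζ : IsPrimitiveRoot ζ m) (hm : m ≠ 0) (a b : ℕ) :
    ζ ^ a * ζ⁻¹ ^ b = 1 ↔ a ≡ b [MOD m] := by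
  rw [inv_pow, mul_inv_eq_one₀ (pow_ne_zero b (hζ.ne_zero hm)),
    (hζ.isOfFinOrder hm).pow_eq_pow_iff_modEq, ← hζ.eq_orderOf]

theorem X_zero_pow_mul_X_one_pow_mem_adjoin {R : Type*} [CommSemiring R] {m a b : ℕ}
    (h : a ≡ b [MOD m]) :
    (X 0 ^ a * X 1 ^ b : MvPolynomial (Fin 2) R) ∈
      Algebra.adjoin R {X 0 ^ m, X 0 * X 1, X 1 ^ m} := by
  set A := Algebra.adjoin R {(X 0 ^ m : MvPolynomial (Fin 2) R), X 0 * X 1, X 1 ^ m}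
  have hx : X 0 ^ m ∈ A := Algebra.subset_adjoin (by simp)
  have hxy : X 0 * X 1 ∈ A := Algebra.subset_adjoin (by simp)
  have hy : X 1 ^ m ∈ A := Algebra.subset_adjoin (by simp)
  rcases le_total b a with hba | hab
  · obtain ⟨k, hk⟩ := (Nat.modEq_iff_dvd' hba).mp h.symm
    obtain rfl : a = b + m * k := by omega
    rw [pow_add, pow_mul, mul_right_comm, ← mul_pow]
    exact mul_mem (pow_mem hxy b) (pow_mem hx k)
  · obtain ⟨k, hk⟩ := (Nat.modEq_iff_dvd' hab).mp h
    obtain rfl : b = a + m * k := by omega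
    rw [pow_add, pow_mul, ← mul_assoc, ← mul_pow]
    exact mul_mem (pow_mem hxy a) (pow_mem hy k)

theorem map_eq_self_iff_mem_adjoin {K : Type*} [Field K] {m : ℕ} {ζ : K}
    (hζ : IsPrimitiveRoot ζ m) (hm : m ≠ 0)
    {σ : MvPolynomial (Fin 2) K →ₐ[K] MvPolynomial (Fin 2) K}
    (hσx : σ (X 0) = C ζ * X 0) (hσy : σ (X 1) = C ζ⁻¹ * X 1)
    (f : MvPolynomial (Fin 2) K) :
    σ f = f ↔ f ∈ Algebra.adjoin K {X 0 ^ m, X 0 * X 1, X 1 ^ m} := by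
  constructor
  · have hσ : ∀ i, σ (X i) = C (![ζ, ζ⁻¹] i) * X i :=
      Fin.forall_fin_two.mpr ⟨hσx, hσy⟩
    rw [map_eq_self_iff_of_map_X_eq_C_mul_X hσ]
    intro hf
    rw [f.as_sum]
    refine Subalgebra.sum_mem _ fun d hd => ?_
    have hw := hf d hd
    rw [Finsupp.prod_fintype _ _ (fun i => pow_zero _), Fin.prod_univ_two] at hw
    rw [monomial_eq, Finsupp.prod_fintype _ _ (fun i => pow_zero _), Fin.prod_univ_two]
    exact mul_mem (Subalgebra.algebraMap_mem _ _)
      (X_zero_pow_mul_X_one_pow_mem_adjoin ((hζ.pow_mul_inv_pow_eq_one_iff hm _ _).mp hw))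
  · refine fun hf => (Algebra.adjoin_le ?_ : _ ≤ AlgHom.equalizer σ (AlgHom.id K _)) hf
    rintro p (rfl | rfl | rfl)
    · simp [hσx, mul_pow, ← C_pow, hζ.pow_eq_one]
    · rw [SetLike.mem_coe, AlgHom.mem_equalizer, map_mul, hσx, hσy, mul_mul_mul_comm, ← C_mul,
        mul_inv_cancel₀ (hζ.ne_zero hm), C_1, one_mul, AlgHom.id_apply]
    · simp [hσy, mul_pow, ← C_pow, hζ.pow_eq_one]

section Presentation

variable {R : Type*} [CommRing R]

variable (R) in
noncomputable def cyclicQuotientMap (m : ℕ) :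
    MvPolynomial (Fin 3) R →ₐ[R] MvPolynomial (Fin 2) R :=
  aeval ![X 0 ^ m, X 1 ^ m, X 0 * X 1]

theorem range_cyclicQuotientMap (m : ℕ) :
    (cyclicQuotientMap R m).range = Algebra.adjoin R {X 0 ^ m, X 0 * X 1, X 1 ^ m} := by
  rw [cyclicQuotientMap, aeval_range, Matrix.range_cons, Matrix.range_cons,
    Matrix.range_cons_empty]
  congr 1
  ext p
  simp only [Set.singleton_union, Set.mem_insert_iff, Set.mem_singleton_iff]
  tauto

theorem cyclicQuotientMap_X_zero_pow_mul_X_two_pow (m a c : ℕ) :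
    cyclicQuotientMap R m (X 0 ^ a * X 2 ^ c : MvPolynomial (Fin 3) R) =
      X 0 ^ (m * a + c) * X 1 ^ c := by
  simp only [cyclicQuotientMap, map_mul, map_pow, aeval_X, Matrix.cons_val]
  ring

theorem cyclicQuotientMap_X_one_pow_mul_X_two_pow (m b c : ℕ) :
    cyclicQuotientMap R m (X 1 ^ b * X 2 ^ c : MvPolynomial (Fin 3) R) =
      X 0 ^ c * X 1 ^ (m * b + c) := by
  simp only [cyclicQuotientMap, map_mul, map_pow, aeval_X, Matrix.cons_val]
  ring

variable (R) in
/-- Monomials with no factor `XY`: they span a complement of the ideal `(XY - Z^m)`. -/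
def reducedMonomials : Set (MvPolynomial (Fin 3) R) :=
  {p | (∃ a c, p = X 0 ^ a * X 2 ^ c) ∨ (∃ b c, p = X 1 ^ b * X 2 ^ c)}

variable (R) in
/-- On `x^i y^j` with `i ≡ j [MOD m]` this is the unique reduced monomial mapped to it by
`cyclicQuotientMap`; on other monomials its value is irrelevant. -/
noncomputable def reducedPreimage (m : ℕ) :
    MvPolynomial (Fin 2) R →ₗ[R] MvPolynomial (Fin 3) R :=
  (basisMonomials (Fin 2) R).constr R fun d =>
    if d 1 ≤ d 0 then X 0 ^ ((d 0 - d 1) / m) * X 2 ^ d 1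
    else X 1 ^ ((d 1 - d 0) / m) * X 2 ^ d 0

theorem reducedPreimage_X_zero_pow_mul_X_one_pow (m i j : ℕ) :
    reducedPreimage R m (X 0 ^ i * X 1 ^ j : MvPolynomial (Fin 2) R) =
      if j ≤ i then X 0 ^ ((i - j) / m) * X 2 ^ j else X 1 ^ ((j - i) / m) * X 2 ^ i := by
  rw [X_pow_eq_monomial, X_pow_eq_monomial, monomial_mul, one_mul, reducedPreimage,
    ← congrFun (coe_basisMonomials (Fin 2) R), Module.Basis.constr_basis]
  simp

theorem reducedPreimage_cyclicQuotientMap {m : ℕ} (hm : m ≠ 0) {r : MvPolynomial (Fin 3) R}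
    (hr : r ∈ Submodule.span R (reducedMonomials R)) :
    reducedPreimage R m (cyclicQuotientMap R m r) = r := by
  induction hr using Submodule.span_induction with
  | mem p hp =>
    rcases hp with ⟨a, c, rfl⟩ | ⟨b, c, rfl⟩
    · rw [cyclicQuotientMap_X_zero_pow_mul_X_two_pow, reducedPreimage_X_zero_pow_mul_X_one_pow,
        if_pos (Nat.le_add_left c _), Nat.add_sub_cancel, Nat.mul_div_cancel_left a (by omega)]
    · rw [cyclicQuotientMap_X_one_pow_mul_X_two_pow, reducedPreimage_X_zero_pow_mul_X_one_pow]
      rcases Nat.eq_zero_or_pos b with rfl | hb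
      · simp
      · rw [if_neg (by nlinarith [Nat.pos_of_ne_zero hm]), Nat.add_sub_cancel,
          Nat.mul_div_cancel_left b (by omega)]
  | zero => simp
  | add p q _ _ hp hq => rw [map_add, map_add, hp, hq]
  | smul a p _ hp => rw [map_smul, map_smul, hp]

theorem X_pow_mul_X_pow_mul_X_pow_mem_span_reducedMonomials_sup (m a b c : ℕ) :
    (X 0 ^ a * X 1 ^ b * X 2 ^ c : MvPolynomial (Fin 3) R) ∈
      Submodule.span R (reducedMonomials R) ⊔
        (Ideal.span {X 0 * X 1 - X 2 ^ m}).restrictScalars R := by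
  induction a generalizing b c with
  | zero =>
    exact Submodule.mem_sup_left (Submodule.subset_span (Or.inr ⟨b, c, by ring⟩))
  | succ a ih =>
    cases b with
    | zero => exact Submodule.mem_sup_left (Submodule.subset_span (Or.inl ⟨a + 1, c, by ring⟩))
    | succ b =>
      have hred : (X 0 ^ (a + 1) * X 1 ^ (b + 1) * X 2 ^ c : MvPolynomial (Fin 3) R) =
          (X 0 * X 1 - X 2 ^ m) * (X 0 ^ a * X 1 ^ b * X 2 ^ c) +
            X 0 ^ a * X 1 ^ b * X 2 ^ (c + m) := by
        ring
      rw [hred]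
      refine add_mem (Submodule.mem_sup_right ?_) (ih b (c + m))
      exact Ideal.mul_mem_right _ _ (Ideal.mem_span_singleton_self _)

theorem mem_span_reducedMonomials_sup (m : ℕ) (f : MvPolynomial (Fin 3) R) :
    f ∈ Submodule.span R (reducedMonomials R) ⊔
        (Ideal.span {X 0 * X 1 - X 2 ^ m}).restrictScalars R := by
  induction f using MvPolynomial.induction_on' with
  | monomial d c =>
    have hd : monomial d c =
        c • (X 0 ^ d 0 * X 1 ^ d 1 * X 2 ^ d 2 : MvPolynomial (Fin 3) R) := by
      rw [monomial_eq, Finsupp.prod_fintype _ _ (fun i => pow_zero _), Fin.prod_univ_three,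
        smul_eq_C_mul]
    rw [hd]
    exact Submodule.smul_mem _ _ (X_pow_mul_X_pow_mul_X_pow_mem_span_reducedMonomials_sup m _ _ _)
  | add p q hp hq => exact add_mem hp hq

theorem ker_cyclicQuotientMap {m : ℕ} (hm : m ≠ 0) :
    RingHom.ker (cyclicQuotientMap R m) = Ideal.span {X 0 * X 1 - X 2 ^ m} := by
  have hrel : cyclicQuotientMap R m (X 0 * X 1 - X 2 ^ m : MvPolynomial (Fin 3) R) = 0 := by
    simp only [cyclicQuotientMap, map_sub, map_mul, map_pow, aeval_X, Matrix.cons_val]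
    ring
  refine le_antisymm (fun f hf => ?_) ((Ideal.span_singleton_le_iff_mem _).mpr hrel)
  obtain ⟨r, hr, i, hi, rfl⟩ :=
    Submodule.mem_sup.mp (mem_span_reducedMonomials_sup (R := R) m f)
  have hi0 : cyclicQuotientMap R m i = 0 :=
    (Ideal.span_singleton_le_iff_mem (RingHom.ker _)).mpr hrel hi
  have hψr : cyclicQuotientMap R m r = 0 := by
    rwa [RingHom.mem_ker, map_add, hi0, add_zero] at hf
  have hr0 : r = 0 := by
    rw [← reducedPreimage_cyclicQuotientMap hm hr, hψr, map_zero]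
  rwa [hr0, zero_add]

end Presentation

/-- Let `ζ` be a primitive `m`-th root of unity and `σ` the
`ℂ`-algebra endomorphism of `ℂ[x,y]` with `σ x = ζ x`, `σ y = ζ⁻¹ y`.  Then the
invariant subalgebra `ℂ[x,y]^σ` is generated by `x^m`, `x*y` and `y^m`; moreover
the `ℂ`-algebra homomorphism `ℂ[X,Y,Z] → ℂ[x,y]` with `X ↦ x^m`, `Y ↦ y^m`,
`Z ↦ x*y` has image the invariant subalgebra and kernel the principal ideal
generated by `X*Y - Z^m`. -/
theorem invariants_of_cyclic_action_Am_singularity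
    (m : ℕ) (hm : 1 ≤ m) (ζ : ℂ) (hζ : IsPrimitiveRoot ζ m)
    (σ : MvPolynomial (Fin 2) ℂ →ₐ[ℂ] MvPolynomial (Fin 2) ℂ)
    (hσx : σ (X 0) = C ζ * X 0) (hσy : σ (X 1) = C ζ⁻¹ * X 1)
    (ψ : MvPolynomial (Fin 3) ℂ →ₐ[ℂ] MvPolynomial (Fin 2) ℂ)
    (hψ : ψ = aeval ![X 0 ^ m, X 1 ^ m, X 0 * X 1]) :
    (∀ f : MvPolynomial (Fin 2) ℂ,
        σ f = f ↔ f ∈ Algebra.adjoin ℂ {X 0 ^ m, X 0 * X 1, X 1 ^ m}) ∧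
    (∀ f : MvPolynomial (Fin 2) ℂ, f ∈ ψ.range ↔ σ f = f) ∧
    RingHom.ker ψ = Ideal.span {X 0 * X 1 - X 2 ^ m} := by
  have hm0 : m ≠ 0 := Nat.one_le_iff_ne_zero.mp hm
  obtain rfl : ψ = cyclicQuotientMap ℂ m := hψ
  have hinv := map_eq_self_iff_mem_adjoin hζ hm0 hσx hσy
  refine ⟨hinv, fun f => ?_, ker_cyclicQuotientMap hm0⟩
  rw [range_cyclicQuotientMap, hinv]
end

section
/- Let V be a finite-dimensional complex vector space with a nondegenerate alternating bilinear form ω₀, and let sp(V, ω₀) denote the Lie algebra of ω₀-skew endomorphisms of V. Then a pair (v, φ) ∈ V × V* satisfies φ(Av) = 0 for all A ∈ sp(V, ω₀) if and only if v = 0 or φ = 0. In other words, the null-fibre of the moment map of the symplectic double of the standard representation of sp(V, ω₀) equals (V × {0}) ∪ ({0} × V*). -/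
/-!
For `u, w ∈ V` the endomorphism `x ↦ ω₀(u, x) w + ω₀(w, x) u` lies in `sp(V, ω₀)` (it is the image
of the symmetric tensor `u ⊙ w` under `Sym² V ≅ sp(V, ω₀)`), and `φ` evaluated on its value at `v`
is `ω₀(u, v) φ(w) + ω₀(w, v) φ(u)`. If `v ≠ 0`, nondegeneracy gives `u` with `ω₀(u, v) ≠ 0`;
taking `w = u` yields `2 ω₀(u, v) φ(u) = 0`, so `φ(u) = 0`, and then every `φ(w)` vanishes.
-/

namespace LinearMap

section CommRing

variable {R M : Type*} [CommRing R] [AddCommGroup M] [Module R M]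

def symmetricRankTwo (ω : M →ₗ[R] M →ₗ[R] R) (u w : M) : M →ₗ[R] M :=
  (ω u).smulRight w + (ω w).smulRight u

@[simp]
theorem symmetricRankTwo_apply (ω : M →ₗ[R] M →ₗ[R] R) (u w x : M) :
    symmetricRankTwo ω u w x = ω u x • w + ω w x • u :=
  rfl

theorem IsAlt.symmetricRankTwo_skew {ω : M →ₗ[R] M →ₗ[R] R} (hω : ω.IsAlt) (u w x y : M) :
    ω (symmetricRankTwo ω u w x) y = -ω x (symmetricRankTwo ω u w y) := by
  simp only [symmetricRankTwo_apply, map_add, map_smul, add_apply, smul_apply, smul_eq_mul,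
    ← hω.neg x w, ← hω.neg x u]
  ring

theorem IsAlt.exists_apply_ne_zero {ω : M →ₗ[R] M →ₗ[R] R} (hω : ω.IsAlt)
    (hsep : ω.SeparatingLeft) {v : M} (hv : v ≠ 0) : ∃ u, ω u v ≠ 0 := by
  by_contra! h
  exact hv ((hω.isRefl.nondegenerate_iff_separatingLeft.mpr hsep).2 v h)

end CommRing

theorem IsAlt.eq_zero_of_forall_dual_symmetricRankTwo_eq_zero {K M : Type*} [Field K]
    [NeZero (2 : K)] [AddCommGroup M] [Module K M] {ω : M →ₗ[K] M →ₗ[K] K} (hω : ω.IsAlt)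
    (hsep : ω.SeparatingLeft) {v : M} (hv : v ≠ 0) {φ : Module.Dual K M}
    (h : ∀ u w, φ (symmetricRankTwo ω u w v) = 0) : φ = 0 := by
  have hφ : ∀ u w, ω u v * φ w + ω w v * φ u = 0 := fun u w => by
    simpa using h u w
  obtain ⟨u, hu⟩ := hω.exists_apply_ne_zero hsep hv
  have hφu : φ u = 0 := by
    have h2 : (2 * ω u v) * φ u = 0 := by linear_combination hφ u u
    exact (mul_eq_zero.mp h2).resolve_left (mul_ne_zero two_ne_zero hu)
  ext w
  simpa [hφu, hu] using hφ u w

end LinearMap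

theorem null_fibre_of_standard_symplectic_representation_general
    {V : Type*} [AddCommGroup V] [Module ℂ V]
    (ω₀ : V →ₗ[ℂ] V →ₗ[ℂ] ℂ) (hAlt : ∀ x, ω₀ x x = 0)
    (hnd : ∀ m, (∀ n, ω₀ m n = 0) → m = 0)
    (v : V) (φ : Module.Dual ℂ V) :
    (∀ A : V →ₗ[ℂ] V, (∀ x y, ω₀ (A x) y = - ω₀ x (A y)) → φ (A v) = 0) ↔
      (v = 0 ∨ φ = 0) := by
  have hω : ω₀.IsAlt := hAlt
  constructor
  · intro h
    refine or_iff_not_imp_left.mpr fun hv => ?_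
    exact hω.eq_zero_of_forall_dual_symmetricRankTwo_eq_zero hnd hv fun u w =>
      h _ (hω.symmetricRankTwo_skew u w)
  · rintro (rfl | rfl) A - <;> simp

/-- Let `V` be a finite-dimensional complex vector space with a
nondegenerate alternating bilinear form `ω₀`.  A pair `(v, φ) ∈ V × V*`
satisfies `φ (A v) = 0` for all `A ∈ sp(V, ω₀)` if and only if `v = 0` or
`φ = 0`; i.e. the null-fibre of the moment map of the symplectic double of the
standard representation of `sp(V, ω₀)` is `(V × {0}) ∪ ({0} × V*)`. -/
theorem null_fibre_of_standard_symplectic_representation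
    {V : Type*} [AddCommGroup V] [Module ℂ V] [FiniteDimensional ℂ V]
    (ω₀ : V →ₗ[ℂ] V →ₗ[ℂ] ℂ) (hAlt : ∀ x, ω₀ x x = 0)
    (hnd : ∀ m, (∀ n, ω₀ m n = 0) → m = 0)
    (v : V) (φ : Module.Dual ℂ V) :
    (∀ A : V →ₗ[ℂ] V, (∀ x y, ω₀ (A x) y = - ω₀ x (A y)) → φ (A v) = 0) ↔
      (v = 0 ∨ φ = 0) :=
  null_fibre_of_standard_symplectic_representation_general ω₀ hAlt hnd v φ
end
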